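/- arXiv:1810.00042 — 3 statements merged into one kernel-verified Lean document; each statement's English description precedes it below -/
import Mathlib

section
/- (Conditional mean independence of H given NUC, discrete time.) Suppose A_m ⫫ Y^{(∞)} | (Ā_{m−1}, L̄_m) (no unmeasured confounding) and E[H | Ā_{m−1}=0̄, A_m, L̄_m] = E[Y^{(∞)} | Ā_{m−1}=0̄, A_m, L̄_m] (mimicking property). Then E[ H | Ā_{m−1}=0̄, A_m, L̄_m ] = E[ H | Ā_{m−1}=0̄, L̄_m ], i.e., the conditional mean of H does not depend on A_m. -/
open MeasureTheory


private lemma aux_integrable_indicator {α β : Type*} [NormedAddCommGroup β]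
    {m : MeasurableSpace α} {μ : MeasureTheory.Measure α} {s : Set α} {f : α → β}
    (h : MeasureTheory.Integrable f μ) (hs : MeasurableSet s) :
    MeasureTheory.Integrable (s.indicator f) μ :=
  h.indicator hs

private lemma aux_ae_restrict_iff_indicator {α β : Type*} {m : MeasurableSpace α} [Zero β]
    {μ : MeasureTheory.Measure α} {s : Set α} {f g : α → β} (hs : MeasurableSet s) :
    f =ᵐ[μ.restrict s] g ↔ s.indicator f =ᵐ[μ] s.indicator g :=
  ae_eq_restrict_iff_indicator_ae_eq hs

/-- Conditional mean independence of H under NUC, discrete time: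
with `𝒢 = σ(Ā_{m−1}, L̄_m)`, `R = {Ā_{m−1} = 0̄} ∈ 𝒢`, treatment `A = A_m ∈ {0,1}`,
no unmeasured confounding `E[Y^{(∞)} | 𝒢, A] = E[Y^{(∞)} | 𝒢]` on `R`, and the
mimicking property `E[H | 𝒢, A] = E[Y^{(∞)} | 𝒢, A]` on `R`, the conditional mean of
`H` does not depend on `A`: `E[H | 𝒢, A] = E[H | 𝒢]` on `R`. -/
theorem stmt10
    {Ω : Type*} (𝒢 : MeasurableSpace Ω) {m0 : MeasurableSpace Ω}
    (P : Measure Ω) [IsProbabilityMeasure P]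
    (h𝒢 : 𝒢 ≤ m0)
    (A : Ω → ℝ) (hA : Measurable A) (hA01 : ∀ ω, A ω = 0 ∨ A ω = 1)
    (Yinf H : Ω → ℝ) (hYint : Integrable Yinf P) (hHint : Integrable H P)
    (R : Set Ω) (hR : MeasurableSet[𝒢] R)
    -- no unmeasured confounding: A ⫫ Y⁽∞⁾ | 𝒢, in the form of conditional means
    (hnuc : P[Yinf|𝒢 ⊔ MeasurableSpace.comap A inferInstance]
        =ᵐ[P.restrict R] P[Yinf|𝒢])
    -- mimicking property
    (hmim : P[H|𝒢 ⊔ MeasurableSpace.comap A inferInstance]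
        =ᵐ[P.restrict R] P[Yinf|𝒢 ⊔ MeasurableSpace.comap A inferInstance]) :
    P[H|𝒢 ⊔ MeasurableSpace.comap A inferInstance] =ᵐ[P.restrict R] P[H|𝒢] := by
  have hG' : 𝒢 ⊔ MeasurableSpace.comap A inferInstance ≤ m0 :=
    sup_le h𝒢 hA.comap_le
  have hle : 𝒢 ≤ 𝒢 ⊔ MeasurableSpace.comap A inferInstance := le_sup_left
  have hRm : MeasurableSet[m0] R := h𝒢 _ hR
  -- Step 1: on R, E[H|𝒢'] = E[Yinf|𝒢]
  have h1 : P[H|𝒢 ⊔ MeasurableSpace.comap A inferInstance] =ᵐ[P.restrict R] P[Yinf|𝒢] :=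
    hmim.trans hnuc
  -- Step 2: show E[H|𝒢] = E[Yinf|𝒢] on R
  have hind : R.indicator (P[H|𝒢 ⊔ MeasurableSpace.comap A inferInstance]) =ᵐ[P]
      R.indicator (P[Yinf|𝒢]) :=
    (aux_ae_restrict_iff_indicator hRm).mp h1
  have htow : P[P[H|𝒢 ⊔ MeasurableSpace.comap A inferInstance]|𝒢] =ᵐ[P] P[H|𝒢] :=
    condExp_condExp_of_le hle hG'
  have hL : P[R.indicator (P[H|𝒢 ⊔ MeasurableSpace.comap A inferInstance])|𝒢] =ᵐ[P]
      R.indicator (P[H|𝒢]) := by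
    refine (condExp_indicator integrable_condExp hR).trans ?_
    filter_upwards [htow] with ω hω
    by_cases h : ω ∈ R <;> simp [Set.indicator, h, hω]
  have hRmeas : StronglyMeasurable[𝒢] (R.indicator (P[Yinf|𝒢])) :=
    stronglyMeasurable_condExp.indicator hR
  have hRint := aux_integrable_indicator (integrable_condExp (m := 𝒢) (f := Yinf) (μ := P)) hRm
  have hRcond : P[R.indicator (P[Yinf|𝒢])|𝒢] = R.indicator (P[Yinf|𝒢]) :=
    condExp_of_stronglyMeasurable h𝒢 hRmeas hRint
  have h2 : P[H|𝒢] =ᵐ[P.restrict R] P[Yinf|𝒢] := by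
    rw [aux_ae_restrict_iff_indicator hRm]
    calc R.indicator (P[H|𝒢])
        =ᵐ[P] P[R.indicator (P[H|𝒢 ⊔ MeasurableSpace.comap A inferInstance])|𝒢] := hL.symm
      _ =ᵐ[P] P[R.indicator (P[Yinf|𝒢])|𝒢] := condExp_congr_ae hind
      _ = R.indicator (P[Yinf|𝒢]) := hRcond
  exact h1.trans h2.symm
end

section
/- (Unbiasedness of the discrete g-estimating function.) Under E[H | Ā_{m−1}=0̄, A_m, L̄_m] = E[H | Ā_{m−1}=0̄, L̄_m] for all 0 ≤ m ≤ K, the estimating function G = Σ_{m=0}^{K} c(V̄_m) 1{Ā_{m−1}=0̄} { A_m − P(A_m = 1 | V̄_m) } { H − E(H | V̄_m) }, with V̄_m = (Ā_{m−1}, L̄_m) and c bounded and V̄_m-measurable, satisfies E[G] = 0. -/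
open MeasureTheory Finset NNReal

/-- Auxiliary: if `g` is `m`-strongly-measurable, vanishes off `R`, and the conditional
expectation of `H` given `m` agrees a.e. on `R` with `ν`, then `∫ g (H - ν) = 0`. -/
lemma aux_zero_stmt11 {Ω : Type*} {m0 : MeasurableSpace Ω}
    (P : Measure Ω) [IsProbabilityMeasure P]
    (m : MeasurableSpace Ω) (hm : m ≤ m0)
    (g H ν : Ω → ℝ) (R : Set Ω)
    (hRm0 : MeasurableSet[m0] R)
    (hgmeas : StronglyMeasurable[m] g)
    (hg0 : ∀ ω, ω ∉ R → g ω = 0)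
    (int_gH : Integrable (fun ω => g ω * H ω) P)
    (int_gν : Integrable (fun ω => g ω * ν ω) P)
    (int_H : Integrable H P)
    (hcnd : P[H|m] =ᵐ[P.restrict R] ν) :
    ∫ ω, g ω * (H ω - ν ω) ∂P = 0 := by
  have hmul : P[(fun ω => g ω * H ω)|m] =ᵐ[P] fun ω => g ω * (P[H|m]) ω :=
    condExp_mul_of_stronglyMeasurable_left hgmeas int_gH int_H
  have haeR : ∀ᵐ ω ∂P, ω ∈ R → (P[H|m]) ω = ν ω := (ae_restrict_iff' hRm0).1 hcnd
  have heq : (fun ω => g ω * (P[H|m]) ω) =ᵐ[P] fun ω => g ω * ν ω := by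
    filter_upwards [haeR] with ω hω
    by_cases h : ω ∈ R
    · rw [hω h]
    · rw [hg0 ω h, zero_mul, zero_mul]
  calc ∫ ω, g ω * (H ω - ν ω) ∂P
      = ∫ ω, (g ω * H ω - g ω * ν ω) ∂P := by
        refine integral_congr_ae (Filter.Eventually.of_forall fun ω => ?_); ring
    _ = (∫ ω, g ω * H ω ∂P) - ∫ ω, g ω * ν ω ∂P := integral_sub int_gH int_gν
    _ = (∫ ω, (P[(fun ω => g ω * H ω)|m]) ω ∂P) - ∫ ω, g ω * ν ω ∂P := by
        rw [integral_condExp hm]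
    _ = (∫ ω, g ω * (P[H|m]) ω ∂P) - ∫ ω, g ω * ν ω ∂P := by
        rw [integral_congr_ae hmul]
    _ = (∫ ω, g ω * ν ω ∂P) - ∫ ω, g ω * ν ω ∂P := by
        rw [integral_congr_ae heq]
    _ = 0 := sub_self _

/-- Unbiasedness of the discrete g-estimating function: under conditional
mean independence `E[H | Ā_{m−1} = 0̄, A_m, L̄_m] = E[H | Ā_{m−1} = 0̄, L̄_m]` for all
`0 ≤ m ≤ K`, the estimating function
`G = ∑_m c(V̄_m) 1{Ā_{m−1} = 0̄} (A_m − P(A_m = 1|V̄_m)) (H − E(H|V̄_m))`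
has mean zero. Here `𝒱 m = σ(V̄_m)` is the history filtration, `π m` a version of the
propensity `P(A_m = 1|V̄_m)` and `μ m` a version of `E(H|V̄_m)`. -/
theorem stmt11
    {Ω : Type*} {m0 : MeasurableSpace Ω}
    (P : Measure Ω) [IsProbabilityMeasure P]
    (𝒱 : ℕ → MeasurableSpace Ω) (h𝒱mono : Monotone 𝒱) (h𝒱le : ∀ k, 𝒱 k ≤ m0)
    (A : ℕ → Ω → ℝ) (hA : ∀ k, Measurable (A k)) (hA01 : ∀ k ω, A k ω = 0 ∨ A k ω = 1)
    (hAadapt : ∀ k, Measurable[𝒱 (k + 1)] (A k))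
    (c π μ : ℕ → Ω → ℝ) (H : Ω → ℝ) (K : ℕ)
    (hc : ∀ k, Measurable[𝒱 k] (c k)) (hcb : ∃ C, ∀ k ω, |c k ω| ≤ C)
    (hπ : ∀ k, Measurable[𝒱 k] (π k)) (hπver : ∀ k, P[A k|𝒱 k] =ᵐ[P] π k)
    (hμ : ∀ k, Measurable[𝒱 k] (μ k)) (hμver : ∀ k, P[H|𝒱 k] =ᵐ[P] μ k)
    (hHb : ∃ C, ∀ ω, |H ω| ≤ C) (hHmeas : Measurable H)
    -- conditional mean independence of H on the event Ā_{m−1} = 0̄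
    (hcmi : ∀ k, P[H|𝒱 k ⊔ MeasurableSpace.comap (A k) inferInstance]
        =ᵐ[P.restrict {ω | ∀ j < k, A j ω = 0}] P[H|𝒱 k])
    (hR : ∀ k, MeasurableSet[𝒱 k] {ω | ∀ j < k, A j ω = 0}) :
    ∫ ω, ∑ k ∈ range (K + 1),
        c k ω * Set.indicator {ω' | ∀ j < k, A j ω' = 0} (fun _ => (1 : ℝ)) ω
          * (A k ω - π k ω) * (H ω - μ k ω) ∂P = 0 := by
  classical
  obtain ⟨C, hC⟩ := hcb
  obtain ⟨D, hD⟩ := hHb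
  -- helper: a.e.-bounded a.e.-strongly-measurable functions are integrable
  have hbInt : ∀ (f : Ω → ℝ), AEStronglyMeasurable f P → ∀ (B : ℝ),
      (∀ᵐ ω ∂P, |f ω| ≤ B) → Integrable f P := fun f hf B hb =>
    Integrable.mono' (integrable_const B) hf (by simpa [Real.norm_eq_abs] using hb)
  have int_H : Integrable H P := hbInt H hHmeas.aestronglyMeasurable D (ae_of_all _ hD)
  have key : ∀ k, Integrable (fun ω =>
      c k ω * Set.indicator {ω' | ∀ j < k, A j ω' = 0} (fun _ => (1 : ℝ)) ω
        * (A k ω - π k ω) * (H ω - μ k ω)) P ∧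
      ∫ ω, c k ω * Set.indicator {ω' | ∀ j < k, A j ω' = 0} (fun _ => (1 : ℝ)) ω
        * (A k ω - π k ω) * (H ω - μ k ω) ∂P = 0 := by
    intro k
    have hm : 𝒱 k ⊔ MeasurableSpace.comap (A k) inferInstance ≤ m0 :=
      sup_le (h𝒱le k) (measurable_iff_comap_le.1 (hA k))
    have hRm0 : MeasurableSet[m0] {ω' | ∀ j < k, A j ω' = 0} := h𝒱le k _ (hR k)
    have hgmeas : StronglyMeasurable[𝒱 k ⊔ MeasurableSpace.comap (A k) inferInstance]
        (fun ω => c k ω * Set.indicator {ω' | ∀ j < k, A j ω' = 0} (fun _ => (1 : ℝ)) ω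
          * (A k ω - π k ω)) := by
      refine Measurable.stronglyMeasurable ?_
      refine Measurable.mul (Measurable.mul ?_ ?_) (Measurable.sub ?_ ?_)
      · exact (hc k).mono le_sup_left le_rfl
      · exact Measurable.indicator measurable_const
          ((le_sup_left : 𝒱 k ≤ _) _ (hR k))
      · exact measurable_iff_comap_le.2 le_sup_right
      · exact (hπ k).mono le_sup_left le_rfl
    have gm0 : Measurable[m0]
        (fun ω => c k ω * Set.indicator {ω' | ∀ j < k, A j ω' = 0} (fun _ => (1 : ℝ)) ω
          * (A k ω - π k ω)) := hgmeas.measurable.mono hm le_rfl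
    -- a.e. bounds
    have hAbdd : ∀ᵐ ω ∂P, |A k ω| ≤ (((1 : ℝ≥0) : ℝ)) :=
      ae_of_all _ fun ω => by rcases hA01 k ω with h | h <;> rw [h] <;> norm_num
    have hπbdd : ∀ᵐ ω ∂P, |π k ω| ≤ 1 := by
      filter_upwards [ae_bdd_condExp_of_ae_bdd (m := 𝒱 k) hAbdd, hπver k] with ω h1 h2
      rw [← h2]; simpa using h1
    have hHbdd : ∀ᵐ ω ∂P, |H ω| ≤ ((D.toNNReal : ℝ≥0) : ℝ) :=
      ae_of_all _ fun ω =>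
        le_trans (hD ω) (by rw [Real.coe_toNNReal']; exact le_max_left _ _)
    have hμbdd : ∀ᵐ ω ∂P, |μ k ω| ≤ max D 0 := by
      filter_upwards [ae_bdd_condExp_of_ae_bdd (m := 𝒱 k) hHbdd, hμver k] with ω h1 h2
      rw [← h2]
      calc |(P[H|𝒱 k]) ω| ≤ ((D.toNNReal : ℝ≥0) : ℝ) := h1
        _ = max D 0 := Real.coe_toNNReal' D
    have hgbdd : ∀ᵐ ω ∂P,
        |c k ω * Set.indicator {ω' | ∀ j < k, A j ω' = 0} (fun _ => (1 : ℝ)) ω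
          * (A k ω - π k ω)| ≤ C * 2 := by
      filter_upwards [hπbdd] with ω hπω
      have hind : |Set.indicator {ω' | ∀ j < k, A j ω' = 0} (fun _ => (1 : ℝ)) ω| ≤ 1 := by
        by_cases h : ω ∈ {ω' | ∀ j < k, A j ω' = 0} <;> simp [Set.indicator_apply, h]
      have h1 : |c k ω * Set.indicator {ω' | ∀ j < k, A j ω' = 0} (fun _ => (1 : ℝ)) ω| ≤ C := by
        rw [abs_mul]
        calc |c k ω| * |Set.indicator {ω' | ∀ j < k, A j ω' = 0} (fun _ => (1 : ℝ)) ω|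
            ≤ C * 1 := mul_le_mul (hC k ω) hind (abs_nonneg _)
              (le_trans (abs_nonneg _) (hC k ω))
          _ = C := mul_one C
      have h2 : |A k ω - π k ω| ≤ 2 := by
        calc |A k ω - π k ω| ≤ |A k ω| + |π k ω| := abs_sub _ _
          _ ≤ 1 + 1 := add_le_add
              (by rcases hA01 k ω with h | h <;> rw [h] <;> norm_num) hπω
          _ = 2 := by norm_num
      rw [abs_mul]
      exact mul_le_mul h1 h2 (abs_nonneg _) (le_trans (abs_nonneg _) h1)
    have int_gH : Integrable (fun ω =>
        (c k ω * Set.indicator {ω' | ∀ j < k, A j ω' = 0} (fun _ => (1 : ℝ)) ω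
          * (A k ω - π k ω)) * H ω) P := by
      refine hbInt _ (gm0.mul hHmeas).aestronglyMeasurable (C * 2 * D) ?_
      filter_upwards [hgbdd] with ω hg
      rw [abs_mul]
      exact mul_le_mul hg (hD ω) (abs_nonneg _) (le_trans (abs_nonneg _) hg)
    have int_gμ : Integrable (fun ω =>
        (c k ω * Set.indicator {ω' | ∀ j < k, A j ω' = 0} (fun _ => (1 : ℝ)) ω
          * (A k ω - π k ω)) * μ k ω) P := by
      refine hbInt _ (gm0.mul ((hμ k).mono (h𝒱le k) le_rfl)).aestronglyMeasurable
        (C * 2 * max D 0) ?_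
      filter_upwards [hgbdd, hμbdd] with ω hg hμω
      rw [abs_mul]
      exact mul_le_mul hg hμω (abs_nonneg _) (le_trans (abs_nonneg _) hg)
    have int_f : Integrable (fun ω =>
        c k ω * Set.indicator {ω' | ∀ j < k, A j ω' = 0} (fun _ => (1 : ℝ)) ω
          * (A k ω - π k ω) * (H ω - μ k ω)) P :=
      (int_gH.sub int_gμ).congr (ae_of_all _ fun ω => by simp only [Pi.sub_apply]; ring)
    have hg0 : ∀ ω, ω ∉ {ω' | ∀ j < k, A j ω' = 0} →
        c k ω * Set.indicator {ω' | ∀ j < k, A j ω' = 0} (fun _ => (1 : ℝ)) ω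
          * (A k ω - π k ω) = 0 := fun ω h => by
      rw [Set.indicator_of_notMem h, mul_zero, zero_mul]
    have hcnd : P[H|𝒱 k ⊔ MeasurableSpace.comap (A k) inferInstance]
        =ᵐ[P.restrict {ω' | ∀ j < k, A j ω' = 0}] μ k :=
      (hcmi k).trans (ae_restrict_of_ae (hμver k))
    exact ⟨int_f,
      aux_zero_stmt11 P _ hm _ H (μ k) _ hRm0 hgmeas hg0 int_gH int_gμ int_H hcnd⟩
  rw [integral_finset_sum _ fun k _ => (key k).1]
  exact Finset.sum_eq_zero fun k _ => (key k).2
end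

section
/- (Variance decomposition for influence functions.) Let 𝓗 = L²₀(P) be the space of mean-zero square-integrable p-vectors, Λ ⊂ 𝓗 a closed linear subspace (nuisance tangent space), and S_ψ ∈ 𝓗. If every influence function Φ of a regular asymptotically linear estimator satisfies Φ ∈ Λ⊥ and E[Φ S_ψᵀ] = I_p, then the efficient influence function Φ_eff = [E(S_eff S_effᵀ)]⁻¹ S_eff with S_eff = Π(S_ψ | Λ⊥) has the smallest variance: for any such Φ, Var(Φ) − Var(Φ_eff) = Var(Φ − Φ_eff) is positive semidefinite. -/
open scoped RealInnerProductSpace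

/-! The normalization `⟪Φ, S_ψ⟫ = 1` only sees the component of `S_ψ` in `Λᗮ`, so
`⟪S_eff, Φ⟫ = 1`. Hence `Φ_eff = ‖S_eff‖⁻² S_eff` is exactly the orthogonal projection of `Φ`
onto the line spanned by `S_eff`, and the decomposition is Pythagoras for that projection. -/

namespace Submodule

variable {E : Type*} [NormedAddCommGroup E] [InnerProductSpace ℝ E]

theorem norm_sq_eq_norm_sq_starProjection_add_norm_sq_sub (K : Submodule ℝ E)
    [K.HasOrthogonalProjection] (w : E) :
    ‖w‖ ^ 2 = ‖K.starProjection w‖ ^ 2 + ‖w - K.starProjection w‖ ^ 2 := by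
  simpa [starProjection_orthogonal_val] using K.norm_sq_eq_add_norm_sq_starProjection w

theorem starProjection_span_singleton_of_inner_eq_one {v w : E} (h : ⟪v, w⟫ = 1) :
    (ℝ ∙ v).starProjection w = ⟪v, v⟫⁻¹ • v := by
  rw [starProjection_singleton, h, real_inner_self_eq_norm_sq, one_div, RCLike.ofReal_real_eq_id,
    id]

end Submodule

theorem stmt13_general
    {H : Type*} [NormedAddCommGroup H] [InnerProductSpace ℝ H]
    (Λ : Submodule ℝ H) [Submodule.HasOrthogonalProjection Λᗮ]
    (Sψ Φ : H) (hΦ : Φ ∈ Λᗮ) (hΦS : ⟪Φ, Sψ⟫ = 1)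
    (Seff : H) (hSeff : Seff = (Submodule.orthogonalProjectionOnto Λᗮ Sψ : H))
    (Φeff : H) (hΦeff : Φeff = (⟪Seff, Seff⟫)⁻¹ • Seff) :
    ‖Φ‖ ^ 2 = ‖Φeff‖ ^ 2 + ‖Φ - Φeff‖ ^ 2 := by
  have hSeffΦ : ⟪Seff, Φ⟫ = 1 := by
    rw [hSeff, ← Submodule.starProjection_apply, Submodule.inner_starProjection_left_eq_right,
      Submodule.starProjection_eq_self_iff.mpr hΦ, real_inner_comm, hΦS]
  rw [hΦeff, ← Submodule.starProjection_span_singleton_of_inner_eq_one hSeffΦ]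
  exact (ℝ ∙ Seff).norm_sq_eq_norm_sq_starProjection_add_norm_sq_sub Φ

/-- Variance decomposition for influence functions, scalar version in an
abstract Hilbert space: with `Λ` the nuisance tangent space (closed subspace), any
influence function `Φ ∈ Λ⊥` normalized by `⟨Φ, S_ψ⟩ = 1`, efficient score
`S_eff = Π(S_ψ | Λ⊥)` and efficient influence function
`Φ_eff = ⟨S_eff, S_eff⟩⁻¹ S_eff`, the variance decomposes as
`‖Φ‖² = ‖Φ_eff‖² + ‖Φ − Φ_eff‖²`, so `Φ_eff` has the smallest variance. -/
theorem stmt13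
    {H : Type*} [NormedAddCommGroup H] [InnerProductSpace ℝ H] [CompleteSpace H]
    (Λ : Submodule ℝ H) (hΛ : IsClosed (Λ : Set H)) [Submodule.HasOrthogonalProjection Λᗮ]
    (Sψ Φ : H) (hΦ : Φ ∈ Λᗮ) (hΦS : ⟪Φ, Sψ⟫ = 1)
    (Seff : H) (hSeff : Seff = (Submodule.orthogonalProjectionOnto Λᗮ Sψ : H))
    (hS0 : ⟪Seff, Seff⟫ ≠ 0)
    (Φeff : H) (hΦeff : Φeff = (⟪Seff, Seff⟫)⁻¹ • Seff) :
    ‖Φ‖ ^ 2 = ‖Φeff‖ ^ 2 + ‖Φ - Φeff‖ ^ 2 :=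
  stmt13_general Λ Sψ Φ hΦ hΦS Seff hSeff Φeff hΦeff
end
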